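/- An ACB graph B=(X,Y,E) has bipartite Dilworth number at most k if and only if B contains no induced subgraph isomorphic to B_{k+1}. -/

import Mathlib

namespace ACB

variable {X Y : Type*}

/-- Neighborhood (in Y) of a vertex x of the bipartite graph with edge relation E. -/
def Nb (E : X → Y → Prop) (x : X) : Set Y := {y | E x y}

/-- Neighborhood (in X) of a vertex y. -/
def NbY (E : X → Y → Prop) (y : Y) : Set X := {x | E x y}

/-- Mirror (bipartite complement). -/
def Mir (E : X → Y → Prop) : X → Y → Prop := fun x y => ¬ E x y

/-- B contains an induced 3K₂: three disjoint edges with no other edges among the six vertices. -/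
def Has3K2 (E : X → Y → Prop) : Prop :=
  ∃ (x : Fin 3 → X) (y : Fin 3 → Y), Function.Injective x ∧ Function.Injective y ∧
    ∀ i j, E (x i) (y j) ↔ i = j

/-- B contains an induced 2K₂. -/
def Has2K2 (E : X → Y → Prop) : Prop :=
  ∃ (x : Fin 2 → X) (y : Fin 2 → Y), Function.Injective x ∧ Function.Injective y ∧
    ∀ i j, E (x i) (y j) ↔ i = j

/-- B contains an induced chordless cycle C_{2k} (k vertices in each class). -/
def HasCycle (E : X → Y → Prop) (k : ℕ) : Prop :=
  ∃ (x : Fin k → X) (y : Fin k → Y), Function.Injective x ∧ Function.Injective y ∧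
    ∀ i j, E (x i) (y j) ↔ (j.val = i.val ∨ j.val = (i.val + 1) % k)

/-- B is chordal bipartite: no induced cycle of length ≥ 6. -/
def ChordalBip (E : X → Y → Prop) : Prop := ∀ k, 3 ≤ k → ¬ HasCycle E k

/-- B is an ACB graph: no induced 3K₂, C₆ or C₈. -/
def ACBGraph (E : X → Y → Prop) : Prop :=
  ¬ Has3K2 E ∧ ¬ HasCycle E 3 ∧ ¬ HasCycle E 4

/-- A finset of X whose neighborhoods are pairwise incomparable. -/
def XAntichain (E : X → Y → Prop) (S : Finset X) : Prop :=
  (S : Set X).Pairwise fun a b => ¬ Nb E a ⊆ Nb E b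

def YAntichain (E : X → Y → Prop) (S : Finset Y) : Prop :=
  (S : Set Y).Pairwise fun a b => ¬ NbY E a ⊆ NbY E b

/-- X-Dilworth number ∇_B(X). -/
noncomputable def dilwX [Fintype X] (E : X → Y → Prop) : ℕ :=
  sSup {n | ∃ S : Finset X, XAntichain E S ∧ S.card = n}

/-- Y-Dilworth number ∇_B(Y). -/
noncomputable def dilwY [Fintype Y] (E : X → Y → Prop) : ℕ :=
  sSup {n | ∃ S : Finset Y, YAntichain E S ∧ S.card = n}

/-- Bipartite Dilworth number. -/
noncomputable def bipDilw [Fintype X] [Fintype Y] (E : X → Y → Prop) : ℕ :=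
  max (dilwX E) (dilwY E)

/-- The graph D_k (1-indexed vertices x_{i+1}, y_{j+1} for i j : Fin (3k-4)):
x_I y_J an edge iff |I-J| ≤ k-2 and {I,J} ∩ {k-1,…,2k-2} ≠ ∅. -/
def Drel (k : ℕ) (i j : Fin (3*k-4)) : Prop :=
  i.val ≤ j.val + (k-2) ∧ j.val ≤ i.val + (k-2) ∧
    ((k-1 ≤ i.val+1 ∧ i.val+1 ≤ 2*k-2) ∨ (k-1 ≤ j.val+1 ∧ j.val+1 ≤ 2*k-2))

/-- The graph B_k: x_I adjacent to y_J iff I ≤ J ≤ I+k-2 (1-indexed). -/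
def Brel (k : ℕ) (i : Fin k) (j : Fin (2*k-2)) : Prop :=
  i.val ≤ j.val ∧ j.val ≤ i.val + (k-2)

/-- split_X(B): complete the first color class to a clique. -/
def splitA (E : X → Y → Prop) : SimpleGraph (X ⊕ Y) :=
  SimpleGraph.fromRel fun a b => match a, b with
    | Sum.inl _, Sum.inl _ => True
    | Sum.inl x, Sum.inr y => E x y
    | _, _ => False

/-- split_Y(B): complete the second color class to a clique. -/
def splitB (E : X → Y → Prop) : SimpleGraph (X ⊕ Y) :=
  SimpleGraph.fromRel fun a b => match a, b with
    | Sum.inr _, Sum.inr _ => True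
    | Sum.inl x, Sum.inr y => E x y
    | _, _ => False

/-- bip(G) for a graph on X ⊕ Y: keep only the cross edges, as a bipartite edge relation. -/
def bipRel (G : SimpleGraph (X ⊕ Y)) : X → Y → Prop :=
  fun x y => G.Adj (Sum.inl x) (Sum.inr y)

/-! In an antichain of an ACB graph say that `b` lies between `a` and `c` when
`N(b) ⊆ N(a) ∪ N(c)`. Excluding 3K₂ puts some vertex of every triple between the other two;
excluding C₆ gives `N(a) ∩ N(c) ⊆ N(b)` whenever `b` lies between `a` and `c`, and excluding C₈
as well yields the four-point laws of a linear betweenness. An end vertex of that betweenness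
orders the antichain as `u₀, …, u_{m-1}` with `u_j` between `u_i` and `u_k` for `i < j < k`.
Then a vertex of `N(u_j) \ N(u_{j+1})` sees exactly `u₀, …, u_j` and one of
`N(u_j) \ N(u_{j-1})` exactly `u_j, …, u_{m-1}`: these `2m - 2` vertices and the antichain induce
`B_m`. Conversely the rows of `B_m` have pairwise incomparable neighbourhoods. -/

open Finset Function

section

variable {Z : Type*} {E : X → Y → Prop}

lemma injective_of_adj_iff_left {ι κ : Type*} {x : ι → X} {y : κ → Y} {P : ι → κ → Prop}
    (h : ∀ i j, E (x i) (y j) ↔ P i j) (hP : ∀ i i', (∀ j, P i j ↔ P i' j) → i = i') :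
    Injective x :=
  fun i i' hx => hP i i' fun j => (h i j).symm.trans (hx ▸ h i' j)

lemma injective_of_adj_iff_right {ι κ : Type*} {x : ι → X} {y : κ → Y} {P : ι → κ → Prop}
    (h : ∀ i j, E (x i) (y j) ↔ P i j) (hP : ∀ j j', (∀ i, P i j ↔ P i j') → j = j') :
    Injective y :=
  fun j j' hy => hP j j' fun i => (h i j).symm.trans (hy ▸ h i j')

lemma has3K2_of_flip (h : Has3K2 fun y x => E x y) : Has3K2 E := by
  obtain ⟨x, y, hx, hy, hE⟩ := h
  exact ⟨y, x, hy, hx, fun i j => (hE j i).trans eq_comm⟩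

lemma Fin.val_eq_val_add_one_mod_iff {k : ℕ} [NeZero k] (i j : Fin k) :
    j.val = (i.val + 1) % k ↔ j = i + 1 := by
  rw [Fin.ext_iff, Fin.val_add, Fin.val_one', Nat.add_mod_mod]

lemma hasCycle_of_flip {k : ℕ} (h : HasCycle (fun y x => E x y) k) : HasCycle E k := by
  obtain ⟨a, b, ha, hb, hE⟩ := h
  rcases Nat.eq_zero_or_pos k with rfl | hk
  · exact ⟨b, a, hb, ha, fun i => i.elim0⟩
  have : NeZero k := ⟨hk.ne'⟩
  -- reversing the orientation of the cycle, `i ↦ -i`, swaps the roles of the two colour classes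
  refine ⟨b ∘ Neg.neg, a ∘ Neg.neg, hb.comp neg_injective, ha.comp neg_injective, fun i j => ?_⟩
  simp only [comp_apply, hE, Fin.val_eq_val_add_one_mod_iff, ← Fin.ext_iff]
  grind

lemma ACBGraph.flip (h : ACBGraph E) : ACBGraph fun y x => E x y :=
  ⟨fun h3 => h.1 (has3K2_of_flip h3), fun h6 => h.2.1 (hasCycle_of_flip h6),
    fun h8 => h.2.2 (hasCycle_of_flip h8)⟩

lemma ACBGraph.comp_left (h : ACBGraph E) {f : Z → X} (hf : Injective f) :
    ACBGraph fun z y => E (f z) y :=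
  ⟨fun ⟨x, y, hx, hy, hE⟩ => h.1 ⟨f ∘ x, y, hf.comp hx, hy, hE⟩,
    fun ⟨x, y, hx, hy, hE⟩ => h.2.1 ⟨f ∘ x, y, hf.comp hx, hy, hE⟩,
    fun ⟨x, y, hx, hy, hE⟩ => h.2.2 ⟨f ∘ x, y, hf.comp hx, hy, hE⟩⟩

def Between (E : X → Y → Prop) (a b c : X) : Prop := Nb E b ⊆ Nb E a ∪ Nb E c

lemma Between.symm {a b c : X} (h : Between E a b c) : Between E c b a :=
  h.trans (Set.union_comm _ _).subset

lemma exists_adj_not_adj (hA : Pairwise fun a b : X => ¬ Nb E a ⊆ Nb E b) {a b : X}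
    (hab : a ≠ b) : ∃ y, E a y ∧ ¬ E b y := by
  obtain ⟨y, hay, hby⟩ := Set.not_subset.1 (hA hab)
  exact ⟨y, hay, hby⟩

def Before (E : X → Y → Prop) (a x y : X) : Prop := x ≠ y ∧ Between E a x y

def HasB (E : X → Y → Prop) (m : ℕ) : Prop :=
  ∃ (f : Fin m → X) (g : Fin (2*m-2) → Y), Injective f ∧ Injective g ∧
    ∀ i j, E (f i) (g j) ↔ Brel m i j

lemma exists_brel_and_not_brel {m : ℕ} {i i' : Fin m} (hii' : i ≠ i') :
    ∃ j : Fin (2*m-2), Brel m i j ∧ ¬ Brel m i' j := by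
  rcases Fin.lt_or_lt_of_ne hii' with hlt | hlt
  · exact ⟨⟨i, by omega⟩, by simp only [Brel]; omega⟩
  · exact ⟨⟨i + (m-2), by omega⟩, by simp only [Brel]; omega⟩

lemma eq_of_brel_iff {m : ℕ} {j j' : Fin (2*m-2)}
    (hjj' : ∀ i : Fin m, Brel m i j ↔ Brel m i j') : j = j' := by
  have key : ∀ j j' : Fin (2*m-2), j < j' → ∃ i : Fin m, ¬ (Brel m i j ↔ Brel m i j') := by
    intro j j' hlt
    by_cases hj' : j'.val + 1 < m
    · exact ⟨⟨j', by omega⟩, by simp only [Brel]; omega⟩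
    · exact ⟨⟨j - (m-2), by omega⟩, by simp only [Brel]; omega⟩
  rcases lt_trichotomy j j' with hlt | rfl | hlt
  · obtain ⟨i, hi⟩ := key j j' hlt
    exact (hi (hjj' i)).elim
  · rfl
  · obtain ⟨i, hi⟩ := key j' j hlt
    exact (hi (hjj' i).symm).elim

lemma HasB.exists_antichain {m : ℕ} (hB : HasB E m) :
    ∃ S : Finset X, XAntichain E S ∧ #S = m := by
  classical
  obtain ⟨f, g, hf, -, hfg⟩ := hB
  refine ⟨univ.image f, ?_, by rw [card_image_of_injective _ hf, card_univ, Fintype.card_fin]⟩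
  simp only [XAntichain, coe_image, coe_univ, Set.image_univ]
  rintro - ⟨i, rfl⟩ - ⟨i', rfl⟩ hne hsub
  obtain ⟨j, hj, hj'⟩ := exists_brel_and_not_brel fun hii' => hne (congrArg f hii')
  exact hj' ((hfg i' j).1 (hsub ((hfg i j).2 hj)))

lemma dilwX_le_iff [Fintype X] {k : ℕ} :
    dilwX E ≤ k ↔ ∀ S : Finset X, XAntichain E S → #S ≤ k := by
  have hbdd : BddAbove {n | ∃ S : Finset X, XAntichain E S ∧ #S = n} := by
    refine ⟨Fintype.card X, ?_⟩
    rintro - ⟨S, -, rfl⟩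
    exact card_le_univ S
  rw [dilwX, csSup_le_iff hbdd ⟨0, ∅, by simp [XAntichain]⟩]
  simp

namespace ACBGraph

variable (h : ACBGraph E) {a b c d : X} {p q r s : Y}
include h

lemma no_induced_3K2
    (hap : E a p) (hbp : ¬ E b p) (hcp : ¬ E c p)
    (haq : ¬ E a q) (hbq : E b q) (hcq : ¬ E c q)
    (har : ¬ E a r) (hbr : ¬ E b r) (hcr : E c r) : False := by
  have hE : ∀ i j, E (![a, b, c] i) (![p, q, r] j) ↔ i = j := by
    intro i j
    fin_cases i <;> fin_cases j <;> simp [*]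
  exact h.1 ⟨_, _, injective_of_adj_iff_left hE (fun i i' hi => ((hi i).1 rfl).symm),
    injective_of_adj_iff_right hE (fun j j' hj => ((hj j').2 rfl).symm), hE⟩

lemma no_induced_C6
    (hap : E a p) (haq : ¬ E a q) (har : E a r)
    (hbp : ¬ E b p) (hbq : E b q) (hbr : E b r)
    (hcp : E c p) (hcq : E c q) (hcr : ¬ E c r) : False := by
  have hE : ∀ i j, E (![a, c, b] i) (![r, p, q] j) ↔
      (j.val = i.val ∨ j.val = (i.val + 1) % 3) := by
    intro i j
    fin_cases i <;> fin_cases j <;> simp [*]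
  exact h.2.1 ⟨_, _, injective_of_adj_iff_left hE (by decide),
    injective_of_adj_iff_right hE (by decide), hE⟩

lemma no_induced_C8
    (hap : E a p) (haq : E a q) (har : ¬ E a r) (has : ¬ E a s)
    (hbp : ¬ E b p) (hbq : E b q) (hbr : E b r) (hbs : ¬ E b s)
    (hcp : ¬ E c p) (hcq : ¬ E c q) (hcr : E c r) (hcs : E c s)
    (hdp : E d p) (hdq : ¬ E d q) (hdr : ¬ E d r) (hds : E d s) : False := by
  have hE : ∀ i j, E (![a, b, c, d] i) (![p, q, r, s] j) ↔
      (j.val = i.val ∨ j.val = (i.val + 1) % 4) := by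
    intro i j
    fin_cases i <;> fin_cases j <;> simp [*]
  exact h.2.2 ⟨_, _, injective_of_adj_iff_left hE (by decide),
    injective_of_adj_iff_right hE (by decide), hE⟩

lemma between_trichotomy (a b c : X) :
    Between E b a c ∨ Between E a b c ∨ Between E a c b := by
  by_contra! hn
  obtain ⟨⟨p, hap, hp⟩, ⟨q, hbq, hq⟩, ⟨r, hcr, hr⟩⟩ :=
    And.imp Set.not_subset.1 (And.imp Set.not_subset.1 Set.not_subset.1) hn
  simp only [Set.mem_union, not_or] at hp hq hr
  exact h.no_induced_3K2 hap hp.1 hp.2 hq.1 hbq hq.2 hr.1 hr.2 hcr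

variable (hA : Pairwise fun a b : X => ¬ Nb E a ⊆ Nb E b)
include hA

lemma inter_subset_of_between (hb : Between E a b c) : Nb E a ∩ Nb E c ⊆ Nb E b := by
  rintro y ⟨hay, hcy⟩
  by_contra hby
  obtain ⟨q, hbq, haq⟩ := exists_adj_not_adj hA (a := b) (b := a) fun hba => hby (hba ▸ hay)
  obtain ⟨r, hbr, hcr⟩ := exists_adj_not_adj hA (a := b) (b := c) fun hbc => hby (hbc ▸ hcy)
  exact h.no_induced_C6 hay haq ((hb hbr).resolve_right hcr) hby hbq hbr hcy
    ((hb hbq).resolve_left haq) hcr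

lemma eq_of_between_of_between (h₁ : Between E a b c) (h₂ : Between E a c b) : b = c := by
  by_contra hbc
  obtain ⟨p, hbp, hcp⟩ := exists_adj_not_adj hA hbc
  exact hcp (h.inter_subset_of_between hA h₂ ⟨(h₁ hbp).resolve_right hcp, hbp⟩)

lemma between_of_between_of_between (h₁ : Between E a b c) (h₂ : Between E a c d) :
    Between E b c d :=
  fun _ hcy => (h₂ hcy).imp_left fun hay => h.inter_subset_of_between hA h₁ ⟨hay, hcy⟩

lemma between_left_of_between (hbc : b ≠ c) (h₁ : Between E a b c) (h₂ : Between E b c d) :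
    Between E a b d := by
  intro y hby
  by_contra hy
  simp only [Set.mem_union, not_or] at hy
  obtain ⟨hay, hdy⟩ := hy
  have hcy : E c y := (h₁ hby).resolve_left hay
  have I₁ := h.inter_subset_of_between hA h₁
  have I₂ := h.inter_subset_of_between hA h₂
  obtain ⟨s, hbs, hcs⟩ := exists_adj_not_adj hA hbc
  have has : E a s := (h₁ hbs).resolve_right hcs
  have hds : ¬ E d s := fun hds => hcs (I₂ ⟨hbs, hds⟩)
  obtain ⟨r, hcr, hbr⟩ := exists_adj_not_adj hA hbc.symm
  have hdr : E d r := (h₂ hcr).resolve_left hbr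
  have har : ¬ E a r := fun har => hbr (I₁ ⟨har, hcr⟩)
  -- the path `a s b y c r d` closes to an induced C₈ through any common neighbour of `a`, `d`
  -- outside `N(b) ∪ N(c)`
  suffices ∃ w, E a w ∧ ¬ E b w ∧ ¬ E c w ∧ E d w by
    obtain ⟨w, haw, hbw, hcw, hdw⟩ := this
    exact h.no_induced_C8 haw has hay har hbw hbs hby hbr hcw hcs hcy hcr hdw hds hdy hdr
  obtain ⟨u, hau, hbu⟩ := exists_adj_not_adj hA (a := a) (b := b) fun hab => hay (hab ▸ hby)
  have hcu : ¬ E c u := fun hcu => hbu (I₁ ⟨hau, hcu⟩)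
  obtain ⟨v, hdv, hcv⟩ := exists_adj_not_adj hA (a := d) (b := c) fun hdc => hdy (hdc ▸ hcy)
  have hbv : ¬ E b v := fun hbv => hcv (I₂ ⟨hbv, hdv⟩)
  by_cases hdu : E d u
  · exact ⟨u, hau, hbu, hcu, hdu⟩
  by_cases hav : E a v
  · exact ⟨v, hav, hbv, hcv, hdv⟩
  exact (h.no_induced_3K2 (b := b) (c := d) hau hbu hdu hay hby hdy hav hbv hdv).elim

lemma between_trans (h₁ : Between E a b c) (h₂ : Between E a c d) : Between E a b d := by
  rcases eq_or_ne b c with rfl | hbc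
  · exact h₂
  · exact h.between_left_of_between hA hbc h₁ (h.between_of_between_of_between hA h₁ h₂)

lemma between_or_between_of_between {u e v : X} (hb : Between E u e v) (a : X) :
    Between E a e u ∨ Between E a e v := by
  rcases eq_or_ne e u with rfl | heu
  · exact Or.inl Set.subset_union_right
  rcases h.between_trichotomy a e u with h' | h' | h'
  · exact Or.inr (h.between_of_between_of_between hA h'.symm hb)
  · exact Or.inl h'
  · exact Or.inr (h.between_left_of_between hA heu hb.symm h'.symm).symm

lemma isStrictOrder_before (a : X) : IsStrictOrder X (Before E a) where
  irrefl _ hx := hx.1 rfl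
  trans _ _ _ hxy hyz :=
    ⟨fun hxz => hxy.1 (h.eq_of_between_of_between hA hxy.2 (hxz ▸ hyz.2)),
      h.between_trans hA hxy.2 hyz.2⟩

lemma exists_forall_between_eq [Finite X] [Nonempty X] :
    ∃ e : X, ∀ u v, Between E u e v → e = u ∨ e = v := by
  obtain ⟨a⟩ := ‹Nonempty X›
  have := h.isStrictOrder_before hA a
  obtain ⟨e, -, he⟩ := (Finite.wellFounded_of_trans_of_irrefl (swap (Before E a))).has_min
    Set.univ ⟨a, trivial⟩
  refine ⟨e, fun u v huv => ?_⟩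
  by_contra! hne
  rcases h.between_or_between_of_between hA huv a with h' | h'
  · exact he u trivial ⟨hne.1, h'⟩
  · exact he v trivial ⟨hne.2, h'⟩

lemma isStrictTotalOrder_before {e : X} (he : ∀ u v, Between E u e v → e = u ∨ e = v) :
    IsStrictTotalOrder X (Before E e) where
  toIsStrictOrder := h.isStrictOrder_before hA e
  trichotomous x y hxy hyx := by
    by_contra hne
    rcases h.between_trichotomy e x y with h' | h' | h'
    · rcases he x y h' with rfl | rfl
      · exact hxy ⟨hne, Set.subset_union_left⟩
      · exact hyx ⟨Ne.symm hne, Set.subset_union_left⟩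
    · exact hxy ⟨hne, h'⟩
    · exact hyx ⟨Ne.symm hne, h'⟩

lemma exists_equiv_fin_between [Fintype X] :
    ∃ u : Fin (Fintype.card X) ≃ X, ∀ i j k, i < j → j < k → Between E (u i) (u j) (u k) := by
  classical
  cases isEmpty_or_nonempty X
  · exact ⟨(Fintype.equivFin X).symm, fun i => isEmptyElim ((Fintype.equivFin X).symm i)⟩
  obtain ⟨e, he⟩ := h.exists_forall_between_eq hA
  have := h.isStrictTotalOrder_before hA he
  let := linearOrderOfSTO (Before E e)
  let u := Fintype.orderIsoFinOfCardEq X rfl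
  exact ⟨u.toEquiv, fun i j k hij hjk => h.between_of_between_of_between hA
    (u.strictMono hij).2 (u.strictMono hjk).2⟩

section Enumeration

variable {m : ℕ} {u : Fin m → X} (hu : Injective u)
  (hbtw : ∀ i j k, i < j → j < k → Between E (u i) (u j) (u k))
include hu hbtw

lemma exists_adj_iff_le {j : ℕ} (hj : j + 1 < m) : ∃ y, ∀ i : Fin m, E (u i) y ↔ i.val ≤ j := by
  let J : Fin m := ⟨j, by omega⟩
  let J' : Fin m := ⟨j + 1, hj⟩
  have hJJ' : J < J' := Fin.mk_lt_mk.2 j.lt_succ_self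
  obtain ⟨y, hJy, hJ'y⟩ := exists_adj_not_adj hA (hu.ne hJJ'.ne)
  refine ⟨y, fun i => ⟨fun hiy => ?_, fun hij => ?_⟩⟩
  · by_contra! hji
    have hJ'i : J' < i :=
      (Fin.le_def.2 (Nat.succ_le_of_lt hji) : J' ≤ i).lt_of_ne fun hJ'i => hJ'y (hJ'i ▸ hiy)
    exact hJ'y (h.inter_subset_of_between hA (hbtw J J' i hJJ' hJ'i) ⟨hJy, hiy⟩)
  · rcases (Fin.le_def.2 hij : i ≤ J).lt_or_eq with hiJ | rfl
    · exact (hbtw i J J' hiJ hJJ' hJy).resolve_right hJ'y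
    · exact hJy

lemma exists_adj_iff_ge {j : ℕ} (hj : 0 < j) (hjm : j < m) :
    ∃ y, ∀ i : Fin m, E (u i) y ↔ j ≤ i.val := by
  obtain ⟨y, hy⟩ := h.exists_adj_iff_le hA (u := u ∘ Fin.rev) (hu.comp Fin.rev_injective)
    (fun i j k hij hjk => (hbtw _ _ _ (Fin.rev_lt_rev.2 hjk) (Fin.rev_lt_rev.2 hij)).symm)
    (j := m - 1 - j) (by omega)
  refine ⟨y, fun i => ?_⟩
  have := hy i.rev
  simp only [comp_apply, Fin.rev_rev, Fin.val_rev] at this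
  rw [this]
  omega

lemma hasB_of_between : HasB E m := by
  have hg : ∀ j : Fin (2*m-2), ∃ y, ∀ i, E (u i) y ↔ Brel m i j := by
    intro j
    by_cases hj : j.val + 1 < m
    · obtain ⟨y, hy⟩ := h.exists_adj_iff_le hA hu hbtw hj
      exact ⟨y, fun i => (hy i).trans (by simp only [Brel]; omega)⟩
    · obtain ⟨y, hy⟩ := h.exists_adj_iff_ge hA hu hbtw (j := j - (m-2)) (by omega) (by omega)
      exact ⟨y, fun i => (hy i).trans (by simp only [Brel]; omega)⟩
  choose g hg using hg
  exact ⟨u, g, hu, injective_of_adj_iff_right (fun i j => hg j i) fun _ _ => eq_of_brel_iff,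
    fun i j => hg j i⟩

end Enumeration

end ACBGraph

lemma ACBGraph.hasB_of_xAntichain (h : ACBGraph E) {S : Finset X} (hS : XAntichain E S) :
    HasB E #S := by
  have hA : Pairwise fun a b : S =>
      ¬ Nb (fun (x : S) y => E x y) a ⊆ Nb (fun (x : S) y => E x y) b :=
    fun a b hab => hS a.2 b.2 (Subtype.coe_ne_coe.2 hab)
  have h' := h.comp_left (f := ((↑) : S → X)) Subtype.val_injective
  obtain ⟨u, hu⟩ := h'.exists_equiv_fin_between hA
  have hB := h'.hasB_of_between hA u.injective hu
  rw [Fintype.card_coe] at hB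
  obtain ⟨f, g, hf, hg, hfg⟩ := hB
  exact ⟨Subtype.val ∘ f, g, Subtype.val_injective.comp hf, hg, hfg⟩

lemma ACBGraph.dilwX_le_iff_not_hasB [Fintype X] (h : ACBGraph E) (k : ℕ) :
    dilwX E ≤ k ↔ ¬ HasB E (k+1) := by
  rw [dilwX_le_iff]
  constructor
  · rintro hk hB
    obtain ⟨S, hS, hcard⟩ := hB.exists_antichain
    have := hk S hS
    omega
  · intro hB S hS
    by_contra! hlt
    obtain ⟨T, hTS, hT⟩ := exists_subset_card_eq (n := k + 1) hlt
    exact hB (hT ▸ h.hasB_of_xAntichain (S := T) (Set.Pairwise.mono (coe_subset.2 hTS) hS))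

end

theorem stmt18_general (k : ℕ) {X Y : Type*} [Fintype X] [Fintype Y]
    (E : X → Y → Prop) (hACB : ACBGraph E) :
    bipDilw E ≤ k ↔
      ¬ ((∃ (f : Fin (k+1) → X) (g : Fin (2*(k+1)-2) → Y),
            Function.Injective f ∧ Function.Injective g ∧
            ∀ i j, E (f i) (g j) ↔ Brel (k+1) i j) ∨
          (∃ (f : Fin (k+1) → Y) (g : Fin (2*(k+1)-2) → X),
            Function.Injective f ∧ Function.Injective g ∧
            ∀ i j, E (g j) (f i) ↔ Brel (k+1) i j)) := by
  rw [bipDilw, max_le_iff, not_or]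
  exact and_congr (hACB.dilwX_le_iff_not_hasB k) (hACB.flip.dilwX_le_iff_not_hasB k)

/-- an ACB graph has bipartite Dilworth number at most k iff it contains no
induced subgraph isomorphic to B_{k+1} (in either orientation of the color classes). -/
theorem stmt18 (k : ℕ) (hk : 1 ≤ k) {X Y : Type*} [Fintype X] [Fintype Y]
    (E : X → Y → Prop) (hACB : ACBGraph E) :
    bipDilw E ≤ k ↔
      ¬ ((∃ (f : Fin (k+1) → X) (g : Fin (2*(k+1)-2) → Y),
            Function.Injective f ∧ Function.Injective g ∧
            ∀ i j, E (f i) (g j) ↔ Brel (k+1) i j) ∨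
          (∃ (f : Fin (k+1) → Y) (g : Fin (2*(k+1)-2) → X),
            Function.Injective f ∧ Function.Injective g ∧
            ∀ i j, E (g j) (f i) ↔ Brel (k+1) i j)) :=
  stmt18_general k E hACB
end ACB
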